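/- For any complex numbers α, α†, β, β†, γ, γ†, the linear map ϱ from the centerless twisted Heisenberg–Virasoro algebra H to H⊗H defined by ϱ(L_n) = (nα+γ) I_0⊗I_n + (nα†+γ†) I_n⊗I_0 and ϱ(I_n) = β I_0⊗I_n + β† I_n⊗I_0 is a derivation, i.e., ϱ([x,y]) = x ∗ ϱ(y) − y ∗ ϱ(x) for all x, y ∈ H. -/

import Mathlib

noncomputable section
open Finsupp

/-- Sign `(-1)^(a*b)` for parities `a b : ZMod 2`. -/
def sg (a b : ZMod 2) : ℂ := if a * b = 1 then -1 else 1

/-- A (basis-presented) superalgebra datum: a basis `ι`, a parity function and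
structure "constants" giving the bracket of two basis elements. -/
structure SuperData where
  ι : Type
  par : ι → ZMod 2
  br : ι → ι → (ι →₀ ℂ)

namespace SuperData

variable (D : SuperData)

/-- The underlying vector space, with basis `ι`. -/
abbrev V := D.ι →₀ ℂ

/-- The tensor square `V ⊗ V`, modelled on the basis `ι × ι`. -/
abbrev T2 := (D.ι × D.ι) →₀ ℂ

/-- The tensor cube `V ⊗ V ⊗ V`. -/
abbrev T3 := (D.ι × D.ι × D.ι) →₀ ℂ

/-- The `n`-fold tensor power. -/
abbrev Tn (n : ℕ) := ((Fin n → D.ι) →₀ ℂ)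

/-- Basis vectors. -/
def e (i : D.ι) : D.V := Finsupp.single i 1

/-- Linear extension of a map defined on the basis. -/
def lift {α : Type*} {M : Type*} [AddCommGroup M] [Module ℂ M] (g : α → M) :
    (α →₀ ℂ) →ₗ[ℂ] M :=
  Finsupp.linearCombination ℂ g

/-- The bilinear bracket extending `D.br`. -/
def brk : D.V →ₗ[ℂ] D.V →ₗ[ℂ] D.V :=
  lift fun i => lift fun j => D.br i j

/-- Bilinear tensor-product map `V × V → V ⊗ V`. -/
def tens2 : D.V →ₗ[ℂ] D.V →ₗ[ℂ] D.T2 :=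
  lift fun i => lift fun j => Finsupp.single (i, j) 1

/-- Trilinear tensor-product map. -/
def tens3 : D.V →ₗ[ℂ] D.V →ₗ[ℂ] D.V →ₗ[ℂ] D.T3 :=
  lift fun i => lift fun j => lift fun k => Finsupp.single (i, j, k) 1

/-- The super-twist map `τ(x ⊗ y) = (-1)^{|x||y|} y ⊗ x`. -/
def tau : D.T2 →ₗ[ℂ] D.T2 :=
  lift fun p => sg (D.par p.1) (D.par p.2) • Finsupp.single (p.2, p.1) 1

/-- The super-cyclic map `ξ = (1⊗τ)(τ⊗1)` on the tensor cube. -/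
def xi : D.T3 →ₗ[ℂ] D.T3 :=
  lift fun p => sg (D.par p.1) (D.par p.2.1 + D.par p.2.2) •
    Finsupp.single (p.2.1, p.2.2, p.1) 1

/-- The adjoint diagonal action of `V` on `V ⊗ V`:
`x ∗ (a⊗b) = [x,a]⊗b + (-1)^{|x||a|} a⊗[x,b]`. -/
def star2 : D.V →ₗ[ℂ] D.T2 →ₗ[ℂ] D.T2 :=
  lift fun k => lift fun p =>
    D.tens2 (D.br k p.1) (D.e p.2) +
      sg (D.par k) (D.par p.1) • D.tens2 (D.e p.1) (D.br k p.2)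

/-- The adjoint diagonal action of `V` on `V ⊗ V ⊗ V`. -/
def star3 : D.V →ₗ[ℂ] D.T3 →ₗ[ℂ] D.T3 :=
  lift fun k => lift fun p =>
    D.tens3 (D.br k p.1) (D.e p.2.1) (D.e p.2.2) +
      sg (D.par k) (D.par p.1) • D.tens3 (D.e p.1) (D.br k p.2.1) (D.e p.2.2) +
      sg (D.par k) (D.par p.1 + D.par p.2.1) •
        D.tens3 (D.e p.1) (D.e p.2.1) (D.br k p.2.2)

/-- The adjoint diagonal action of `V` on the `n`-fold tensor power, with Koszul signs. -/
def starN (n : ℕ) : D.V →ₗ[ℂ] D.Tn n →ₗ[ℂ] D.Tn n :=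
  lift fun k => lift fun f =>
    ∑ i : Fin n, sg (D.par k) (∑ j ∈ Finset.Iio i, D.par (f j)) •
      Finsupp.mapDomain (Function.update f i) (D.br k (f i))

/-- `c(r) = [r¹²,r¹³] + [r¹²,r²³] + [r¹³,r²³]`, the Yang–Baxter expression. -/
def cybe (r : D.T2) : D.T3 :=
  r.sum fun p a => r.sum fun q b => (a * b) •
    (sg (D.par q.1) (D.par p.2) •
        (D.tens3 (D.br p.1 q.1) (D.e p.2) (D.e q.2) +
          D.tens3 (D.e p.1) (D.e q.1) (D.br p.2 q.2)) +
      D.tens3 (D.e p.1) (D.br p.2 q.1) (D.e q.2))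

/-- The image of `1 - τ` in `V ⊗ V`. -/
def ImSkew : Submodule ℂ D.T2 := LinearMap.range (LinearMap.id - D.tau)

/-- `x` is homogeneous of parity `dp`. -/
def Homog1 (dp : ZMod 2) (x : D.V) : Prop := ∀ i ∈ x.support, D.par i = dp

/-- `t ∈ V ⊗ V` is homogeneous of parity `dp`. -/
def Homog2 (dp : ZMod 2) (t : D.T2) : Prop :=
  ∀ p ∈ t.support, D.par p.1 + D.par p.2 = dp

/-- `t ∈ V ⊗ V` is even. -/
def IsEven2 (t : D.T2) : Prop := D.Homog2 0 t

/-- Super skew-symmetry of the bracket (on homogeneous elements). -/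
def SuperSkew : Prop :=
  ∀ (px py : ZMod 2) (x y : D.V), D.Homog1 px x → D.Homog1 py y →
    D.brk x y = -sg px py • D.brk y x

/-- The graded Jacobi identity
`(-1)^{|x||z|}[x,[y,z]] + (-1)^{|y||x|}[y,[z,x]] + (-1)^{|z||y|}[z,[x,y]] = 0`. -/
def SuperJacobi : Prop :=
  ∀ (px py pz : ZMod 2) (x y z : D.V), D.Homog1 px x → D.Homog1 py y → D.Homog1 pz z →
    sg px pz • D.brk x (D.brk y z) + sg py px • D.brk y (D.brk z x) +
      sg pz py • D.brk z (D.brk x y) = 0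

/-- `D` presents a Lie superalgebra. -/
def IsLieSuper : Prop := D.SuperSkew ∧ D.SuperJacobi

/-- `f : V → V ⊗ V` is a homogeneous derivation of parity `dp`. -/
def IsDer2 (dp : ZMod 2) (f : D.V →ₗ[ℂ] D.T2) : Prop :=
  ∀ i j, f (D.br i j) =
    sg dp (D.par i) • D.star2 (D.e i) (f (D.e j)) -
      sg (D.par j) (dp + D.par i) • D.star2 (D.e j) (f (D.e i))

/-- `f : V → V` is a homogeneous derivation of parity `dp` (adjoint coefficients). -/
def IsDerV (dp : ZMod 2) (f : D.V →ₗ[ℂ] D.V) : Prop :=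
  ∀ i j, f (D.br i j) =
    sg dp (D.par i) • D.brk (D.e i) (f (D.e j)) -
      sg (D.par j) (dp + D.par i) • D.brk (D.e j) (f (D.e i))

/-- `(1 ⊗ Δ)` as a map `V⊗V → V⊗V⊗V`, for `Δ : V → V⊗V`. -/
def oneDelta (Δf : D.V →ₗ[ℂ] D.T2) : D.T2 →ₗ[ℂ] D.T3 :=
  lift fun p => Finsupp.mapDomain (fun q : D.ι × D.ι => (p.1, q.1, q.2)) (Δf (D.e p.2))

/-- `Δf` makes `D` into a Lie superbialgebra: `Δf` respects the `ℤ₂`-grading, has image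
in `Im(1-τ)`, satisfies co-Jacobi, and is compatible with the bracket via the
adjoint diagonal action. -/
def IsSBialg (Δf : D.V →ₗ[ℂ] D.T2) : Prop :=
  (∀ (dp : ZMod 2) (x : D.V), D.Homog1 dp x → D.Homog2 dp (Δf x)) ∧
  (∀ x : D.V, Δf x ∈ D.ImSkew) ∧
  (∀ x : D.V, D.oneDelta Δf (Δf x) + D.xi (D.oneDelta Δf (Δf x)) +
      D.xi (D.xi (D.oneDelta Δf (Δf x))) = 0) ∧
  (∀ i j, Δf (D.br i j) =
    D.star2 (D.e i) (Δf (D.e j)) - sg (D.par i) (D.par j) • D.star2 (D.e j) (Δf (D.e i)))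

end SuperData

open SuperData

/-- Basis of the centerless `N=2` superconformal Neveu–Schwarz algebra:
`L m`, `I m` for `m : ℤ`, and `G s k` denoting `G_{k+1/2}^±` (`s = true` for `+`). -/
inductive NSI : Type
  | L : ℤ → NSI
  | I : ℤ → NSI
  | G : Bool → ℤ → NSI
  deriving DecidableEq

/-- Structure constants of the centerless `N=2` Neveu–Schwarz algebra
(`G s k` stands for `G^±_r` with `r = k + 1/2`). -/
def nsBr : NSI → NSI → (NSI →₀ ℂ)
  | .L m, .L n => ((m : ℂ) - n) • Finsupp.single (.L (m + n)) 1
  | .L m, .I n => (-(n : ℂ)) • Finsupp.single (.I (m + n)) 1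
  | .I m, .L n => (m : ℂ) • Finsupp.single (.I (m + n)) 1
  | .I _, .I _ => 0
  | .L m, .G s k => (((m : ℂ) - 2 * k - 1) / 2) • Finsupp.single (.G s (m + k)) 1
  | .G s k, .L m => (-(((m : ℂ) - 2 * k - 1) / 2)) • Finsupp.single (.G s (m + k)) 1
  | .I m, .G s k => (if s then (1 : ℂ) else -1) • Finsupp.single (.G s (m + k)) 1
  | .G s k, .I m => (if s then (-1 : ℂ) else 1) • Finsupp.single (.G s (m + k)) 1
  | .G true k, .G false l =>
      (2 : ℂ) • Finsupp.single (.L (k + l + 1)) 1 +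
        ((k : ℂ) - l) • Finsupp.single (.I (k + l + 1)) 1
  | .G false k, .G true l =>
      (2 : ℂ) • Finsupp.single (.L (k + l + 1)) 1 +
        ((l : ℂ) - k) • Finsupp.single (.I (k + l + 1)) 1
  | .G true _, .G true _ => 0
  | .G false _, .G false _ => 0

/-- Parity on the Neveu–Schwarz basis. -/
def nsPar : NSI → ZMod 2
  | .G _ _ => 1
  | _ => 0

/-- The centerless `N=2` superconformal Neveu–Schwarz algebra. -/
def NSd : SuperData := ⟨NSI, nsPar, nsBr⟩

/-- Twice the `½ℤ`-degree: `deg L_m = deg I_m = -m`, `deg G_r^± = -r`. -/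
def deg2 : NSI → ℤ
  | .L m => -(2 * m)
  | .I m => -(2 * m)
  | .G _ k => -(2 * k + 1)

/-- Basis of the centerless twisted Heisenberg–Virasoro algebra. -/
inductive HVI : Type
  | L : ℤ → HVI
  | I : ℤ → HVI
  deriving DecidableEq

/-- Structure constants of the centerless twisted Heisenberg–Virasoro algebra. -/
def hvBr : HVI → HVI → (HVI →₀ ℂ)
  | .L m, .L n => ((m : ℂ) - n) • Finsupp.single (.L (m + n)) 1
  | .L m, .I n => (-(n : ℂ)) • Finsupp.single (.I (m + n)) 1
  | .I m, .L n => (m : ℂ) • Finsupp.single (.I (m + n)) 1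
  | .I _, .I _ => 0

/-- The centerless twisted Heisenberg–Virasoro algebra (purely even). -/
def HVd : SuperData := ⟨HVI, fun _ => 0, hvBr⟩

/-- The map `ϱ` with `ϱ(L_n) = (nα+γ) I_0⊗I_n + (nα†+γ†) I_n⊗I_0`,
`ϱ(I_n) = β I_0⊗I_n + β† I_n⊗I_0`. -/
def rho (α α' γ γ' β β' : ℂ) : HVd.V →ₗ[ℂ] HVd.T2 :=
  SuperData.lift fun i => match i with
    | .L n => ((n : ℂ) * α + γ) • Finsupp.single (HVI.I 0, HVI.I n) 1 +
        ((n : ℂ) * α' + γ') • Finsupp.single (HVI.I n, HVI.I 0) 1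
    | .I n => β • Finsupp.single (HVI.I 0, HVI.I n) 1 +
        β' • Finsupp.single (HVI.I n, HVI.I 0) 1

/-!
Both sides of the identity are bilinear in `x` and `y`, so it suffices to check it on pairs of
basis vectors. There `ϱ` takes values in the span of the `I₀ ⊗ Iₙ` and `Iₙ ⊗ I₀`; the `I`'s act
trivially on these and `L_m` shifts one index by `m`, so each of the four cases `L/L`, `L/I`,
`I/L`, `I/I` is a comparison of coefficients that are polynomial in the indices.
-/

namespace SuperData

theorem lift_single {α M : Type*} [AddCommGroup M] [Module ℂ M] (g : α → M) (a : α) (c : ℂ) :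
    lift g (Finsupp.single a c) = c • g a :=
  Finsupp.linearCombination_single ℂ c a

variable (D : SuperData)

theorem single_eq_smul_e (i : D.ι) (c : ℂ) : (Finsupp.single i c : D.V) = c • D.e i := by
  rw [e, Finsupp.smul_single_one]

theorem brk_e_e (i j : D.ι) : D.brk (D.e i) (D.e j) = D.br i j := by
  simp only [brk, e, lift_single, one_smul]

theorem tens2_e_e (a b : D.ι) : D.tens2 (D.e a) (D.e b) = Finsupp.single (a, b) 1 := by
  simp only [tens2, e, lift_single, one_smul]

theorem star2_e_tens2_e_e (k a b : D.ι) :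
    D.star2 (D.e k) (D.tens2 (D.e a) (D.e b)) =
      D.tens2 (D.br k a) (D.e b) + sg (D.par k) (D.par a) • D.tens2 (D.e a) (D.br k b) := by
  rw [tens2_e_e]
  simp only [star2, e, lift_single, one_smul]

theorem map_brk_of_map_br (f : D.V →ₗ[ℂ] D.T2)
    (h : ∀ i j, f (D.br i j) = D.star2 (D.e i) (f (D.e j)) - D.star2 (D.e j) (f (D.e i)))
    (x y : D.V) : f (D.brk x y) = D.star2 x (f y) - D.star2 y (f x) := by
  induction x using Finsupp.induction_linear with
  | zero => simp
  | add x x' hx hx' => simp only [map_add, LinearMap.add_apply, hx, hx']; abel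
  | single i c =>
    induction y using Finsupp.induction_linear with
    | zero => simp
    | add y y' hy hy' => simp only [map_add, LinearMap.add_apply, hy, hy']; abel
    | single j d =>
      simp only [single_eq_smul_e, map_smul, LinearMap.smul_apply, brk_e_e, h, smul_sub]
      module

end SuperData

namespace HVd

theorem br_L_L (m n : ℤ) : HVd.br (.L m) (.L n) = ((m : ℂ) - n) • HVd.e (.L (m + n)) := rfl

theorem br_L_I (m n : ℤ) : HVd.br (.L m) (.I n) = (-(n : ℂ)) • HVd.e (.I (m + n)) := rfl

theorem br_I_L (m n : ℤ) : HVd.br (.I m) (.L n) = (m : ℂ) • HVd.e (.I (m + n)) := rfl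

theorem br_I_I (m n : ℤ) : HVd.br (.I m) (.I n) = 0 := rfl

-- The next two lemmas specialise `SuperData` lemmas to binders of type `HVI`: `HVd.ι` unfolds
-- to `HVI` only at default transparency, so `simp` and `rw` cannot instantiate the general
-- lemmas at `HVI`-terms.
theorem tens2_e_e (a b : HVI) : HVd.tens2 (HVd.e a) (HVd.e b) = Finsupp.single (a, b) 1 :=
  SuperData.tens2_e_e HVd a b

theorem star2_e_tens2_e_e (k a b : HVI) :
    HVd.star2 (HVd.e k) (HVd.tens2 (HVd.e a) (HVd.e b)) =
      HVd.tens2 (HVd.br k a) (HVd.e b) + HVd.tens2 (HVd.e a) (HVd.br k b) := by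
  have h := SuperData.star2_e_tens2_e_e HVd k a b
  have hsg : sg (HVd.par k) (HVd.par a) = 1 := rfl
  rwa [hsg, one_smul] at h

end HVd

section

variable (α α' γ γ' β β' : ℂ)

theorem rho_e_L (n : ℤ) :
    rho α α' γ γ' β β' (HVd.e (.L n)) =
      ((n : ℂ) * α + γ) • HVd.tens2 (HVd.e (.I 0)) (HVd.e (.I n)) +
        ((n : ℂ) * α' + γ') • HVd.tens2 (HVd.e (.I n)) (HVd.e (.I 0)) := by
  rw [HVd.tens2_e_e, HVd.tens2_e_e]
  exact (SuperData.lift_single _ _ _).trans (one_smul _ _)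

theorem rho_e_I (n : ℤ) :
    rho α α' γ γ' β β' (HVd.e (.I n)) =
      β • HVd.tens2 (HVd.e (.I 0)) (HVd.e (.I n)) +
        β' • HVd.tens2 (HVd.e (.I n)) (HVd.e (.I 0)) := by
  rw [HVd.tens2_e_e, HVd.tens2_e_e]
  exact (SuperData.lift_single _ _ _).trans (one_smul _ _)

theorem rho_br (i j : HVI) :
    rho α α' γ γ' β β' (HVd.br i j) =
      HVd.star2 (HVd.e i) (rho α α' γ γ' β β' (HVd.e j)) -
        HVd.star2 (HVd.e j) (rho α α' γ γ' β β' (HVd.e i)) := by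
  rcases i with m | m <;> rcases j with n | n <;>
    simp only [HVd.br_L_L, HVd.br_L_I, HVd.br_I_L, HVd.br_I_I, rho_e_L, rho_e_I, map_add,
      map_smul, map_zero, HVd.star2_e_tens2_e_e, LinearMap.smul_apply, LinearMap.zero_apply,
      add_zero, add_comm n m] <;>
    match_scalars <;> ring

end

/-- each ϱ is a derivation from the centerless twisted
Heisenberg–Virasoro algebra to its tensor square with the adjoint diagonal action. -/
theorem rho_is_derivation (α α' γ γ' β β' : ℂ) :
    ∀ x y : HVd.V,
      rho α α' γ γ' β β' (HVd.brk x y) =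
        HVd.star2 x (rho α α' γ γ' β β' y) - HVd.star2 y (rho α α' γ γ' β β' x) :=
  HVd.map_brk_of_map_br _ (rho_br α α' γ γ' β β')
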